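/- ℝ^N decomposes as the direct sum ℝ^N = ker A ⊕ im A, the sum being orthogonal for the v-weighted inner product; moreover im A = im A². -/

import Mathlib

/-!
Since the rows of `A` sum to zero, `(A k)ᵢ = ∑ⱼ Aᵢⱼ (kⱼ - kᵢ)`. At a maximum of a kernel vector `k`
all these terms are `≤ 0`, hence vanish, so the maximum propagates along the edges of the strongly
connected graph: `ker A` consists of the constants. Because `vᵀ A = 0`, every `A u` is
`v`-orthogonal to the constants; positivity of `v` then gives `ker A ∩ im A = 0`, and rank–nullity
upgrades this to `ker A ⊕ im A`. Applying `A` to this decomposition gives `im A² = A (im A) = im A`.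
-/

open Matrix Finset

namespace LinearMap

variable {K V : Type*} [Field K] [AddCommGroup V] [Module K V]

theorem isCompl_ker_range_of_disjoint [FiniteDimensional K V] {f : V →ₗ[K] V}
    (h : Disjoint (ker f) (range f)) : IsCompl (ker f) (range f) :=
  (Submodule.isCompl_iff_disjoint _ _ (by rw [add_comm, finrank_range_add_finrank_ker])).mpr h

theorem range_comp_self_of_codisjoint {f : V →ₗ[K] V} (h : Codisjoint (ker f) (range f)) :
    range (f ∘ₗ f) = range f := by
  conv_rhs => rw [← Submodule.map_top, ← codisjoint_iff.mp h, Submodule.map_sup]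
  rw [range_comp, right_eq_sup]
  exact (Submodule.map_le_iff_le_comap.2 (Submodule.comap_bot f).ge).trans bot_le

end LinearMap

namespace Matrix

variable {ι : Type*} {A : Matrix ι ι ℝ}

theorem reflTransGen_pos_of_transGen_pos {σ : Matrix ι ι ℝ}
    (hoff : ∀ i j, i ≠ j → A i j = σ i j)
    (hconn : ∀ i j, i ≠ j → Relation.TransGen (fun a b => 0 < σ a b) i j) (i j : ι) :
    Relation.ReflTransGen (fun a b => 0 < A a b) i j := by
  rcases eq_or_ne i j with rfl | hij
  · exact .refl
  refine Relation.reflTransGen_closed (fun a b hab => ?_) _ _ (hconn i j hij).to_reflTransGen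
  rcases eq_or_ne a b with rfl | hab'
  · exact .refl
  · exact .single (hoff a b hab' ▸ hab)

variable [Fintype ι]

theorem sum_apply_eq_zero_of_diag_eq_neg_sum [DecidableEq ι] {σ : Matrix ι ι ℝ}
    (hoff : ∀ i j, i ≠ j → A i j = σ i j)
    (hdiag : ∀ i, A i i = -∑ k ∈ univ.filter (fun k => k ≠ i), σ i k) (i : ι) :
    ∑ j, A i j = 0 := by
  rw [← add_sum_erase _ _ (mem_univ i), hdiag, filter_ne',
    sum_congr rfl fun j hj => hoff i j (ne_of_mem_erase hj).symm, neg_add_cancel]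

theorem mulVec_apply_eq_sum_mul_sub (hrow : ∀ i, ∑ j, A i j = 0) (k : ι → ℝ) (i : ι) :
    (A *ᵥ k) i = ∑ j, A i j * (k j - k i) := by
  simp only [mul_sub, sum_sub_distrib, ← sum_mul, hrow, zero_mul, sub_zero]
  rfl

theorem apply_eq_of_mulVec_eq_zero_of_forall_le (hA : ∀ i j, i ≠ j → 0 ≤ A i j)
    (hrow : ∀ i, ∑ j, A i j = 0) {k : ι → ℝ} (hk : A *ᵥ k = 0) {b c : ι}
    (hmax : ∀ j, k j ≤ k b) (hbc : 0 < A b c) : k c = k b := by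
  have hterm : ∀ j ∈ univ, A b j * (k j - k b) ≤ 0 := by
    intro j _
    rcases eq_or_ne b j with rfl | hbj
    · simp
    · exact mul_nonpos_of_nonneg_of_nonpos (hA b j hbj) (sub_nonpos.2 (hmax j))
  have hsum : ∑ j, A b j * (k j - k b) = 0 := by
    rw [← mulVec_apply_eq_sum_mul_sub hrow, hk, Pi.zero_apply]
  have hc := (sum_eq_zero_iff_of_nonpos hterm).1 hsum c (mem_univ c)
  linarith [(mul_eq_zero.1 hc).resolve_left hbc.ne']

theorem apply_eq_apply_of_mulVec_eq_zero (hA : ∀ i j, i ≠ j → 0 ≤ A i j)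
    (hrow : ∀ i, ∑ j, A i j = 0)
    (hconn : ∀ i j, Relation.ReflTransGen (fun a b => 0 < A a b) i j)
    {k : ι → ℝ} (hk : A *ᵥ k = 0) (i j : ι) : k i = k j := by
  have : Nonempty ι := ⟨i⟩
  obtain ⟨b, hb⟩ := Finite.exists_max k
  have hreach : ∀ c, Relation.ReflTransGen (fun a b => 0 < A a b) b c → k c = k b := by
    intro c h
    induction h with
    | refl => rfl
    | tail _ hcd ih =>
      rw [← ih]
      exact apply_eq_of_mulVec_eq_zero_of_forall_le hA hrow hk (ih ▸ hb) hcd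
  rw [hreach i (hconn b i), hreach j (hconn b j)]

theorem sum_mul_mul_mulVec_eq_zero {v k : ι → ℝ} (hv : Aᵀ *ᵥ v = 0) (hk : ∀ i j, k i = k j)
    (u : ι → ℝ) : ∑ i, v i * k i * (A *ᵥ u) i = 0 := by
  rcases isEmpty_or_nonempty ι with hι | ⟨⟨i₀⟩⟩
  · simp
  calc ∑ i, v i * k i * (A *ᵥ u) i = k i₀ * (v ⬝ᵥ A *ᵥ u) := by
        simp only [hk _ i₀, dotProduct, mul_sum]
        exact sum_congr rfl fun i _ => by ring
    _ = 0 := by rw [dotProduct_mulVec, ← mulVec_transpose, hv, zero_dotProduct, mul_zero]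

end Matrix

theorem disjoint_of_forall_sum_mul_mul_eq_zero {ι : Type*} [Fintype ι] {v : ι → ℝ}
    (hv : ∀ i, 0 < v i) {p q : Submodule ℝ (ι → ℝ)}
    (horth : ∀ x ∈ p, ∀ y ∈ q, ∑ i, v i * x i * y i = 0) : Disjoint p q := by
  rw [Submodule.disjoint_def]
  intro x hxp hxq
  have hnonneg : ∀ i ∈ univ, 0 ≤ v i * x i * x i := fun i _ => by
    rw [mul_assoc]; exact mul_nonneg (hv i).le (mul_self_nonneg _)
  funext i
  have hi := (sum_eq_zero_iff_of_nonneg hnonneg).1 (horth x hxp x hxq) i (mem_univ i)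
  rw [mul_assoc, mul_eq_zero, mul_self_eq_zero] at hi
  exact hi.resolve_left (hv i).ne'

theorem direct_sum_ker_range_general (N : ℕ) (σ A : Matrix (Fin N) (Fin N) ℝ)
    (hσ : ∀ i j, i ≠ j → 0 ≤ σ i j)
    (hoff : ∀ i j, i ≠ j → A i j = σ i j)
    (hdiag : ∀ i, A i i = -∑ k ∈ Finset.univ.filter (fun k => k ≠ i), σ i k)
    (hconn : ∀ i j : Fin N, i ≠ j → Relation.TransGen (fun a b => 0 < σ a b) i j)
    (v : Fin N → ℝ) (hvpos : ∀ i, 0 < v i)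
    (hv : Aᵀ.mulVec v = 0) :
    IsCompl (LinearMap.ker (Matrix.mulVecLin A)) (LinearMap.range (Matrix.mulVecLin A)) ∧
    (∀ k r : Fin N → ℝ, A.mulVec k = 0 → (∃ u, A.mulVec u = r) →
      ∑ i, v i * k i * r i = 0) ∧
    LinearMap.range (Matrix.mulVecLin A) = LinearMap.range (Matrix.mulVecLin (A * A)) := by
  have hA : ∀ i j, i ≠ j → 0 ≤ A i j := fun i j h => hoff i j h ▸ hσ i j h
  have hrow := sum_apply_eq_zero_of_diag_eq_neg_sum hoff hdiag
  have hconnA := reflTransGen_pos_of_transGen_pos hoff hconn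
  have horth : ∀ k r : Fin N → ℝ, A *ᵥ k = 0 → (∃ u, A *ᵥ u = r) →
      ∑ i, v i * k i * r i = 0 := by
    rintro k _ hk ⟨u, rfl⟩
    exact sum_mul_mul_mulVec_eq_zero hv (apply_eq_apply_of_mulVec_eq_zero hA hrow hconnA hk) u
  have hcompl : IsCompl (LinearMap.ker A.mulVecLin) (LinearMap.range A.mulVecLin) :=
    LinearMap.isCompl_ker_range_of_disjoint <|
      disjoint_of_forall_sum_mul_mul_eq_zero hvpos fun x hx y hy => horth x y hx hy
  refine ⟨hcompl, horth, ?_⟩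
  rw [mulVecLin_mul, LinearMap.range_comp_self_of_codisjoint hcompl.codisjoint]

theorem direct_sum_ker_range (N : ℕ) (σ A : Matrix (Fin N) (Fin N) ℝ)
    (hσ : ∀ i j, i ≠ j → 0 ≤ σ i j)
    (hoff : ∀ i j, i ≠ j → A i j = σ i j)
    (hdiag : ∀ i, A i i = -∑ k ∈ Finset.univ.filter (fun k => k ≠ i), σ i k)
    (hconn : ∀ i j : Fin N, i ≠ j → Relation.TransGen (fun a b => 0 < σ a b) i j)
    (v : Fin N → ℝ) (hvpos : ∀ i, 0 < v i) (hvsum : ∑ i, v i = 1)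
    (hv : Aᵀ.mulVec v = 0) :
    IsCompl (LinearMap.ker (Matrix.mulVecLin A)) (LinearMap.range (Matrix.mulVecLin A)) ∧
    (∀ k r : Fin N → ℝ, A.mulVec k = 0 → (∃ u, A.mulVec u = r) →
      ∑ i, v i * k i * r i = 0) ∧
    LinearMap.range (Matrix.mulVecLin A) = LinearMap.range (Matrix.mulVecLin (A * A)) :=
  direct_sum_ker_range_general N σ A hσ hoff hdiag hconn v hvpos hv
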